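/- Trees are closed under insertion: let V₁, V₂ be disjoint finite sets with * ∈ V₁, and let t₁, t₂ be trees (connected acyclic simple graphs) on V₁, V₂ respectively. Then every graph in the support of t₁ ∘_* t₂ is a tree on (V₁ \ {*}) ∪ V₂. (This is the claim that the species of trees forms a suboperad of the graph insertion operad.) -/

import Mathlib

/-!
Common framework: a simple graph on a finite vertex set `V ⊆ α` is a finite set of
unordered pairs (`Sym2 α`) of distinct elements of `V`.  The insertion
`g₁ ∘_star g₂` is an element of the free `ℚ`-module `Finset (Sym2 α) →₀ ℚ`
on the set of edge sets.
-/

open scoped Classical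

variable {α : Type*} [DecidableEq α]

/-- The finite edge set `g` is a simple graph on the vertex set `V`. -/
def IsGraphOn (V : Finset α) (g : Finset (Sym2 α)) : Prop :=
  ∀ e ∈ g, ¬ e.IsDiag ∧ ∀ v ∈ e, v ∈ V

/-- The two endpoints of an unordered pair, as a `Finset`. -/
def sym2Finset : Sym2 α → Finset α :=
  Sym2.lift ⟨fun a b => {a, b}, by intro a b; simp [Finset.pair_comm]⟩

/-- Neighbours of `x` in the edge set `g`. -/
def nbrs (g : Finset (Sym2 α)) (x : α) : Finset α :=
  (g.biUnion sym2Finset).filter fun v => s(x, v) ∈ g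

/-- Remove the vertex `x` (and all incident edges) from the edge set `g`. -/
def delG (g : Finset (Sym2 α)) (x : α) : Finset (Sym2 α) :=
  g.filter fun e => x ∉ e

/-- The edges `{v, f v}` obtained from a reconnection map `f : C → V₂`. -/
def newEdges (C V₂ : Finset α) (f : {v // v ∈ C} → {w // w ∈ V₂}) : Finset (Sym2 α) :=
  Finset.univ.image fun v : {v // v ∈ C} => s(v.1, (f v).1)

/-- Insertion `g₁ ∘_star g₂` of a graph `g₂` on the vertex set `V₂` into a graph `g₁`:
the sum, over all maps `f` from the neighbours of `star` in `g₁` to `V₂`, of the graph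
obtained by deleting `star` from `g₁`, adding `g₂`, and reconnecting along `f`. -/
noncomputable def ins (V₂ : Finset α) (star : α) (g₁ g₂ : Finset (Sym2 α)) :
    Finset (Sym2 α) →₀ ℚ :=
  ∑ f : ({v // v ∈ nbrs g₁ star} → {w // w ∈ V₂}),
    Finsupp.single (delG g₁ star ∪ g₂ ∪ newEdges (nbrs g₁ star) V₂ f) 1

/-- Bilinear extension of the insertion to the free module on graphs. -/
noncomputable def insM (V₂ : Finset α) (star : α) (x y : Finset (Sym2 α) →₀ ℚ) :
    Finset (Sym2 α) →₀ ℚ :=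
  x.sum fun g₁ c₁ => y.sum fun g₂ c₂ => (c₁ * c₂) • ins V₂ star g₁ g₂

/-- The simple graph associated with an edge set. -/
def toSG (g : Finset (Sym2 α)) : SimpleGraph α where
  Adj x y := x ≠ y ∧ s(x, y) ∈ g
  symm := by
    constructor
    intro x y h
    exact ⟨h.1.symm, by rw [Sym2.eq_swap]; exact h.2⟩
  loopless := by
    constructor
    intro x h
    exact h.1 rfl

/-- The edge set `g` is connected on `V`: any two vertices of `V` are joined by a path. -/
def IsConnOn (V : Finset α) (g : Finset (Sym2 α)) : Prop :=
  ∀ x ∈ V, ∀ y ∈ V, (toSG g).Reachable x y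

/-- A tree on `V`: a connected acyclic simple graph on `V`. -/
def IsTreeOn (V : Finset α) (g : Finset (Sym2 α)) : Prop :=
  IsGraphOn V g ∧ IsConnOn V g ∧ (toSG g).IsAcyclic

/-!
Fix a reconnection map `f`. Every vertex of `V₁ \ {*}` is joined to `*` in `t₁`; replacing the
last edge `{v, *}` of such a walk by `{v, f v}` joins it to `V₂`, which `t₂` connects.
For acyclicity, collapse `V₂` onto `*`: the edges that collapse are those of `t₂`, and the others
map injectively onto edges of `t₁` (`{v, f v} ↦ {v, *}`). So a cycle of the inserted graph is
either a cycle of `t₂` or projects onto a nonempty closed trail of `t₁`; neither exists.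
-/

namespace SimpleGraph

variable {V W : Type*} {G G' K : SimpleGraph V} {H : SimpleGraph W}

theorem Walk.exists_reachable_mem {s : V} {S : Set V}
    (hle : ∀ a b, G.Adj a b → a ≠ s → b ≠ s → G'.Adj a b)
    (hnbr : ∀ a, G.Adj a s → ∃ z ∈ S, G'.Reachable a z) {x : V} (w : G.Walk x s)
    (hx : x ≠ s) : ∃ z ∈ S, G'.Reachable x z := by
  induction w with
  | nil => exact absurd rfl hx
  | @cons a b t hab p ih =>
    by_cases hb : b = t
    · exact hnbr a (hb ▸ hab)
    · obtain ⟨z, hz, hbz⟩ := ih hle hnbr hb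
      exact ⟨z, hz, (hle a b hab hx hb).reachable.trans hbz⟩

theorem Walk.exists_walk_edges_eq_map_filter (π : V → W)
    (hmap : ∀ e ∈ G.edgeSet, ¬(e.map π).IsDiag → e.map π ∈ H.edgeSet) {x y : V}
    (w : G.Walk x y) : ∃ w' : H.Walk (π x) (π y),
      w'.edges = (w.edges.filter fun e => ¬(e.map π).IsDiag).map (Sym2.map π) := by
  induction w with
  | nil => exact ⟨nil, rfl⟩
  | @cons a b _ hab p ih =>
    obtain ⟨w', hw'⟩ := ih
    by_cases hπ : π a = π b
    · refine ⟨w'.copy hπ.symm rfl, ?_⟩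
      simp [hw', hπ]
    · have hadj : H.Adj (π a) (π b) := by
        simpa [hπ] using hmap s(a, b) hab
      refine ⟨cons hadj w', ?_⟩
      simp [hw', hπ]

theorem isAcyclic_of_contraction (π : V → W) (hK : K.IsAcyclic) (hH : H.IsAcyclic)
    (hcollapse : ∀ e ∈ G.edgeSet, (e.map π).IsDiag → e ∈ K.edgeSet)
    (hmap : ∀ e ∈ G.edgeSet, ¬(e.map π).IsDiag → e.map π ∈ H.edgeSet)
    (hinj : ∀ e ∈ G.edgeSet, ∀ e' ∈ G.edgeSet, ¬(e.map π).IsDiag →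
      e.map π = e'.map π → e = e') :
    G.IsAcyclic := by
  intro v c hc
  by_cases hall : ∀ e ∈ c.edges, (e.map π).IsDiag
  · exact hK _ (hc.transfer fun e he => hcollapse e (c.edges_subset_edgeSet he) (hall e he))
  push Not at hall
  obtain ⟨e₀, he₀, hne₀⟩ := hall
  obtain ⟨c', hc'⟩ := c.exists_walk_edges_eq_map_filter π hmap
  have hnodup : c'.edges.Nodup := by
    rw [hc']
    refine (hc.edges_nodup.filter _).map_on fun e he e' he' => ?_
    rw [List.mem_filter, decide_eq_true_iff] at he he'
    exact hinj e (c.edges_subset_edgeSet he.1) e' (c.edges_subset_edgeSet he'.1) he.2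
  have hmem : e₀.map π ∈ c'.edges :=
    hc' ▸ List.mem_map_of_mem (List.mem_filter.mpr ⟨he₀, decide_eq_true hne₀⟩)
  have hne : c' ≠ Walk.nil := by
    rintro rfl
    simp at hmem
  exact hH _ (Walk.IsCircuit.isCycle_cycleBypass ⟨⟨hnodup⟩, hne⟩)

end SimpleGraph

lemma mem_sym2Finset {x : α} {e : Sym2 α} : x ∈ sym2Finset e ↔ x ∈ e := by
  induction e using Sym2.ind with
  | _ a b => simp [sym2Finset, Sym2.mem_iff]

lemma mem_nbrs {g : Finset (Sym2 α)} {x v : α} : v ∈ nbrs g x ↔ s(x, v) ∈ g := by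
  refine ⟨fun h => (Finset.mem_filter.mp h).2, fun h => Finset.mem_filter.mpr ⟨?_, h⟩⟩
  exact Finset.mem_biUnion.mpr ⟨s(x, v), h, mem_sym2Finset.mpr (Sym2.mem_mk_right x v)⟩

omit [DecidableEq α] in
lemma mem_edgeSet_toSG {g : Finset (Sym2 α)} {e : Sym2 α} :
    e ∈ (toSG g).edgeSet ↔ e ∈ g ∧ ¬e.IsDiag := by
  induction e using Sym2.ind with
  | _ a b => exact ⟨fun h => ⟨h.2, h.1⟩, fun h => ⟨h.2, h.1⟩⟩

omit [DecidableEq α] in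
lemma toSG_mono {g g' : Finset (Sym2 α)} (h : g ⊆ g') : toSG g ≤ toSG g' :=
  fun _ _ hadj => ⟨hadj.1, h hadj.2⟩

def insertionGraph (V₂ : Finset α) (star : α) (g₁ g₂ : Finset (Sym2 α))
    (f : {v // v ∈ nbrs g₁ star} → {w // w ∈ V₂}) : Finset (Sym2 α) :=
  delG g₁ star ∪ g₂ ∪ newEdges (nbrs g₁ star) V₂ f

lemma exists_eq_insertionGraph_of_mem_support_ins {V₂ : Finset α} {star : α}
    {g₁ g₂ g : Finset (Sym2 α)} (hg : g ∈ (ins V₂ star g₁ g₂).support) :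
    ∃ f, g = insertionGraph V₂ star g₁ g₂ f := by
  obtain ⟨f, -, hf⟩ := Finsupp.mem_support_finsetSum g hg
  exact ⟨f, Finset.mem_singleton.mp (Finsupp.support_single_subset hf)⟩

def collapse (V₂ : Finset α) (star u : α) : α :=
  if u ∈ V₂ then star else u

section Insertion

variable {V₁ V₂ : Finset α} {star : α} {t₁ t₂ : Finset (Sym2 α)}
  (f : {v // v ∈ nbrs t₁ star} → {w // w ∈ V₂})

lemma mem_insertionGraph {e : Sym2 α} :
    e ∈ insertionGraph V₂ star t₁ t₂ f ↔
      (e ∈ t₁ ∧ star ∉ e) ∨ e ∈ t₂ ∨ ∃ v, e = s(v.1, (f v).1) := by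
  simp [insertionGraph, delG, newEdges, eq_comm]

lemma mem_and_ne_of_mem_nbrs (h₁ : IsGraphOn V₁ t₁) {v : α} (hv : v ∈ nbrs t₁ star) :
    v ∈ V₁ ∧ v ≠ star := by
  obtain ⟨hdiag, hV₁⟩ := h₁ _ (mem_nbrs.mp hv)
  exact ⟨hV₁ v (Sym2.mem_mk_right _ _), fun h => hdiag (by simp [h])⟩

lemma ne_reconnect (hd : Disjoint V₁ V₂) (h₁ : IsGraphOn V₁ t₁) (v : {v // v ∈ nbrs t₁ star}) :
    v.1 ≠ (f v).1 := fun h =>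
  Finset.disjoint_left.mp hd (mem_and_ne_of_mem_nbrs h₁ v.2).1 (h ▸ (f v).2)

lemma isGraphOn_insertionGraph (hd : Disjoint V₁ V₂) (h₁ : IsGraphOn V₁ t₁)
    (h₂ : IsGraphOn V₂ t₂) : IsGraphOn (V₁.erase star ∪ V₂) (insertionGraph V₂ star t₁ t₂ f) := by
  intro e he
  rcases (mem_insertionGraph f).mp he with ⟨he, hstar⟩ | he | ⟨v, rfl⟩
  · refine ⟨(h₁ e he).1, fun u hu => Finset.mem_union_left _ (Finset.mem_erase.mpr ⟨?_, ?_⟩)⟩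
    · rintro rfl
      exact hstar hu
    · exact (h₁ e he).2 u hu
  · exact ⟨(h₂ e he).1, fun u hu => Finset.mem_union_right _ ((h₂ e he).2 u hu)⟩
  · obtain ⟨hvV₁, hvstar⟩ := mem_and_ne_of_mem_nbrs h₁ v.2
    refine ⟨by simpa using ne_reconnect f hd h₁ v, fun u hu => ?_⟩
    rcases Sym2.mem_iff.mp hu with rfl | rfl
    · exact Finset.mem_union_left _ (Finset.mem_erase.mpr ⟨hvstar, hvV₁⟩)
    · exact Finset.mem_union_right _ (f v).2

lemma isConnOn_insertionGraph (hd : Disjoint V₁ V₂) (hstar : star ∈ V₁)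
    (h₁ : IsGraphOn V₁ t₁) (hc₁ : IsConnOn V₁ t₁) (hc₂ : IsConnOn V₂ t₂) :
    IsConnOn (V₁.erase star ∪ V₂) (insertionGraph V₂ star t₁ t₂ f) := by
  set g := insertionGraph V₂ star t₁ t₂ f
  have hle : ∀ a b, (toSG t₁).Adj a b → a ≠ star → b ≠ star → (toSG g).Adj a b := by
    refine fun a b hab ha hb => ⟨hab.1, (mem_insertionGraph f).mpr (Or.inl ⟨hab.2, ?_⟩)⟩
    intro h
    rcases Sym2.mem_iff.mp h with rfl | rfl
    exacts [ha rfl, hb rfl]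
  have hnbr : ∀ a, (toSG t₁).Adj a star → ∃ z ∈ (V₂ : Set α), (toSG g).Reachable a z := by
    intro a ha
    have hv : a ∈ nbrs t₁ star := mem_nbrs.mpr (Sym2.eq_swap ▸ ha.2)
    refine ⟨f ⟨a, hv⟩, (f ⟨a, hv⟩).2, SimpleGraph.Adj.reachable ⟨ne_reconnect f hd h₁ ⟨a, hv⟩, ?_⟩⟩
    exact (mem_insertionGraph f).mpr (Or.inr (Or.inr ⟨⟨a, hv⟩, rfl⟩))
  have hreach : ∀ x ∈ V₁.erase star ∪ V₂, ∃ z ∈ (V₂ : Set α), (toSG g).Reachable x z := by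
    intro x hx
    rcases Finset.mem_union.mp hx with hx | hx
    · obtain ⟨hxstar, hxV₁⟩ := Finset.mem_erase.mp hx
      obtain ⟨w⟩ := hc₁ x hxV₁ star hstar
      exact w.exists_reachable_mem hle hnbr hxstar
    · exact ⟨x, hx, .rfl⟩
  have ht₂ : toSG t₂ ≤ toSG g :=
    toSG_mono fun e he => (mem_insertionGraph f).mpr (Or.inr (Or.inl he))
  intro x hx y hy
  obtain ⟨zx, hzx, hxzx⟩ := hreach x hx
  obtain ⟨zy, hzy, hyzy⟩ := hreach y hy
  exact hxzx.trans (((hc₂ zx hzx zy hzy).mono ht₂).trans hyzy.symm)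

lemma map_collapse_cases (hd : Disjoint V₁ V₂) (h₁ : IsGraphOn V₁ t₁) (h₂ : IsGraphOn V₂ t₂)
    {e : Sym2 α} (he : e ∈ insertionGraph V₂ star t₁ t₂ f) :
    (e ∈ t₂ ∧ (e.map (collapse V₂ star)).IsDiag) ∨
      (e ∈ t₁ ∧ star ∉ e ∧ e.map (collapse V₂ star) = e) ∨
      ∃ v, e = s(v.1, (f v).1) ∧ e.map (collapse V₂ star) = s(v.1, star) := by
  have hfix : ∀ u ∈ V₁, collapse V₂ star u = u := fun u hu =>
    if_neg (Finset.disjoint_left.mp hd hu)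
  rcases (mem_insertionGraph f).mp he with ⟨ht₁, hstar⟩ | ht₂ | ⟨v, rfl⟩
  · refine Or.inr (Or.inl ⟨ht₁, hstar, ?_⟩)
    rw [Sym2.map_congr fun u hu => hfix u ((h₁ e ht₁).2 u hu), Sym2.map_id', id]
  · refine Or.inl ⟨ht₂, ?_⟩
    induction e using Sym2.ind with
    | _ a b =>
      have hV₂ := (h₂ _ ht₂).2
      simp [collapse, hV₂ a (Sym2.mem_mk_left a b), hV₂ b (Sym2.mem_mk_right a b)]
  · refine Or.inr (Or.inr ⟨v, rfl, ?_⟩)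
    rw [Sym2.map_mk, hfix _ (mem_and_ne_of_mem_nbrs h₁ v.2).1, collapse, if_pos (f v).2]

lemma eq_of_map_collapse_eq (hd : Disjoint V₁ V₂) (h₁ : IsGraphOn V₁ t₁) (h₂ : IsGraphOn V₂ t₂)
    {e e' : Sym2 α} (he : e ∈ insertionGraph V₂ star t₁ t₂ f)
    (he' : e' ∈ insertionGraph V₂ star t₁ t₂ f) (hndiag : ¬(e.map (collapse V₂ star)).IsDiag)
    (heq : e.map (collapse V₂ star) = e'.map (collapse V₂ star)) : e = e' := by
  rcases map_collapse_cases f hd h₁ h₂ he with ⟨-, hdiag⟩ | ⟨-, hstar, hmap⟩ | ⟨v, rfl, hmap⟩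
  · exact absurd hdiag hndiag
  · rcases map_collapse_cases f hd h₁ h₂ he' with ⟨-, hdiag'⟩ | ⟨-, -, hmap'⟩ | ⟨v', rfl, hmap'⟩
    · exact absurd (heq ▸ hdiag') hndiag
    · rw [← hmap, heq, hmap']
    · exact absurd (hmap ▸ heq ▸ hmap' ▸ Sym2.mem_mk_right _ _) hstar
  · rcases map_collapse_cases f hd h₁ h₂ he' with
      ⟨-, hdiag'⟩ | ⟨-, hstar', hmap'⟩ | ⟨v', rfl, hmap'⟩
    · exact absurd (heq ▸ hdiag') hndiag
    · exact absurd (hmap' ▸ heq ▸ hmap ▸ Sym2.mem_mk_right _ _) hstar'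
    · rw [hmap, hmap', Sym2.congr_left] at heq
      rw [Subtype.ext heq]

lemma isAcyclic_insertionGraph (hd : Disjoint V₁ V₂) (h₁ : IsGraphOn V₁ t₁)
    (h₂ : IsGraphOn V₂ t₂) (ha₁ : (toSG t₁).IsAcyclic) (ha₂ : (toSG t₂).IsAcyclic) :
    (toSG (insertionGraph V₂ star t₁ t₂ f)).IsAcyclic := by
  refine SimpleGraph.isAcyclic_of_contraction (collapse V₂ star) ha₂ ha₁ ?_ ?_ ?_
  · intro e he hdiag
    obtain ⟨he, hndiag⟩ := mem_edgeSet_toSG.mp he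
    rcases map_collapse_cases f hd h₁ h₂ he with ⟨ht₂, -⟩ | ⟨-, -, hmap⟩ | ⟨v, -, hmap⟩
    · exact mem_edgeSet_toSG.mpr ⟨ht₂, hndiag⟩
    · exact absurd (hmap ▸ hdiag) hndiag
    · exact absurd (Sym2.mk_isDiag_iff.mp (hmap ▸ hdiag)) (mem_and_ne_of_mem_nbrs h₁ v.2).2
  · intro e he hndiag
    obtain ⟨he, hndiag'⟩ := mem_edgeSet_toSG.mp he
    rcases map_collapse_cases f hd h₁ h₂ he with ⟨-, hdiag⟩ | ⟨ht₁, -, hmap⟩ | ⟨v, -, hmap⟩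
    · exact absurd hdiag hndiag
    · rw [hmap]
      exact mem_edgeSet_toSG.mpr ⟨ht₁, hndiag'⟩
    · rw [hmap] at hndiag ⊢
      exact mem_edgeSet_toSG.mpr ⟨Sym2.eq_swap ▸ mem_nbrs.mp v.2, hndiag⟩
  · intro e he e' he' hndiag heq
    exact eq_of_map_collapse_eq f hd h₁ h₂ (mem_edgeSet_toSG.mp he).1
      (mem_edgeSet_toSG.mp he').1 hndiag heq

end Insertion

/-- **Trees are closed under insertion**: if `t₁` and `t₂` are trees, every graph in the
support of `t₁ ∘_star t₂` is a tree on `(V₁ \ {star}) ∪ V₂`. -/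
theorem trees_closed_under_insertion
    (V₁ V₂ : Finset α) (star : α)
    (hd : Disjoint V₁ V₂) (hstar : star ∈ V₁)
    (t₁ t₂ : Finset (Sym2 α))
    (ht₁ : IsTreeOn V₁ t₁) (ht₂ : IsTreeOn V₂ t₂) :
    ∀ g ∈ (ins V₂ star t₁ t₂).support, IsTreeOn (V₁.erase star ∪ V₂) g := by
  obtain ⟨h₁, hc₁, ha₁⟩ := ht₁
  obtain ⟨h₂, hc₂, ha₂⟩ := ht₂
  intro g hg
  obtain ⟨f, rfl⟩ := exists_eq_insertionGraph_of_mem_support_ins hg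
  exact ⟨isGraphOn_insertionGraph f hd h₁ h₂, isConnOn_insertionGraph f hd hstar h₁ hc₁ hc₂,
    isAcyclic_insertionGraph f hd h₁ h₂ ha₁ ha₂⟩
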